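/- Strong duality for the inner nature-minimization problem: let S be a finite set, l, u, x : S → ℝ with the set H = {h | l ≤ h ≤ u, ∑_s h(s) = 1} nonempty. Then min_{h∈H} ∑_s h(s)·x(s) equals max over (γ₁ ∈ ℝ, γ₂, γ₃ : S → ℝ with γ₂, γ₃ ≥ 0 and x(s) − γ₂(s) + γ₃(s) − γ₁ = 0 for all s) of γ₁ + ∑_s l(s)·γ₂(s) − ∑_s u(s)·γ₃(s). -/

import Mathlib

/-!
By compactness the linear objective attains its minimum on the polytope at some `h`. Moving
mass from a state `j` with `l j < h j` to a state `i` with `h i < u i` is feasible, so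
minimality forces `x j ≤ x i`: there is a threshold `t` below which `h` sits at its upper
bound and above which at its lower bound. Then `γ₁ = t`, `γ₂ = (x - t)⁺`, `γ₃ = (x - t)⁻`
is dual feasible with the same value (complementary slackness), and weak duality finishes.
-/

open Finset

theorem exists_between_of_forall_le_of_finite {ι α : Type*} [Finite ι] [LinearOrder α] [Nonempty α]
    (x : ι → α) (P Q : ι → Prop) (hPQ : ∀ i j, P i → Q j → x i ≤ x j) :
    ∃ t, (∀ i, P i → x i ≤ t) ∧ ∀ j, Q j → t ≤ x j := by
  rcases em (∃ i, P i) with ⟨i₀, hi₀⟩ | hP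
  · have := Fintype.ofFinite ι
    classical
    obtain ⟨i, hi, hmax⟩ := (univ.filter P).exists_max_image x ⟨i₀, by simpa using hi₀⟩
    refine ⟨x i, fun i' hi' => hmax i' (by simpa using hi'), fun j hj => ?_⟩
    exact hPQ i j (by simpa using hi) hj
  · obtain ⟨t, ht⟩ := Finite.exists_ge x
    exact ⟨t, fun i hi => absurd ⟨i, hi⟩ hP, fun j _ => ht j⟩

section

variable {S : Type*} [Fintype S]

def intervalSimplex (l u : S → ℝ) : Set (S → ℝ) :=
  {h | (∀ s, l s ≤ h s) ∧ (∀ s, h s ≤ u s) ∧ ∑ s, h s = 1}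

theorem isCompact_intervalSimplex (l u : S → ℝ) : IsCompact (intervalSimplex l u) := by
  have hIcc : intervalSimplex l u = Set.Icc l u ∩ {h | ∑ s, h s = 1} := by
    ext h
    simp [intervalSimplex, Pi.le_def, and_assoc]
  rw [hIcc]
  exact isCompact_Icc.inter_right (isClosed_eq (by fun_prop) continuous_const)

theorem le_of_isMinOn_intervalSimplex {l u x h : S → ℝ} (hH : h ∈ intervalSimplex l u)
    (hmin : IsMinOn (fun g => ∑ s, g s * x s) (intervalSimplex l u) h) {i j : S}
    (hi : h i < u i) (hj : l j < h j) : x j ≤ x i := by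
  classical
  by_contra! hlt
  have hij : i ≠ j := by rintro rfl; exact hlt.false
  obtain ⟨hl, hu, hsum⟩ := hH
  set ε := min (u i - h i) (h j - l j)
  have hε : 0 < ε := lt_min (sub_pos.mpr hi) (sub_pos.mpr hj)
  have hεi : ε ≤ u i - h i := min_le_left _ _
  have hεj : ε ≤ h j - l j := min_le_right _ _
  set g := h + Pi.single i ε - Pi.single j ε
  have hg : g ∈ intervalSimplex l u := by
    refine ⟨fun s => ?_, fun s => ?_, ?_⟩
    · simp only [g, Pi.add_apply, Pi.sub_apply, Pi.single_apply]
      grind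
    · simp only [g, Pi.add_apply, Pi.sub_apply, Pi.single_apply]
      grind
    · simp [g, sum_add_distrib, sum_sub_distrib, hsum]
  have hval : ∑ s, g s * x s = ∑ s, h s * x s - ε * (x j - x i) := by
    simp only [g, Pi.sub_apply, Pi.add_apply, Pi.single_apply, sub_mul, add_mul, ite_mul,
      zero_mul, sum_sub_distrib, sum_add_distrib, sum_ite_eq', mem_univ, if_true]
    ring
  have hle : ∑ s, h s * x s ≤ ∑ s, g s * x s := hmin hg
  nlinarith [mul_pos hε (sub_pos.mpr hlt)]

theorem exists_threshold_of_isMinOn {l u x h : S → ℝ} (hH : h ∈ intervalSimplex l u)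
    (hmin : IsMinOn (fun g => ∑ s, g s * x s) (intervalSimplex l u) h) :
    ∃ t, ∀ s, (x s < t → h s = u s) ∧ (t < x s → h s = l s) := by
  obtain ⟨t, hlow, hup⟩ := exists_between_of_forall_le_of_finite x (fun j => l j < h j)
    (fun i => h i < u i) fun j i hj hi => le_of_isMinOn_intervalSimplex hH hmin hi hj
  refine ⟨t, fun s => ⟨fun hs => ?_, fun hs => ?_⟩⟩
  · exact (hH.2.1 s).antisymm (not_lt.mp fun hsu => (hup s hsu).not_gt hs)
  · exact ((hH.1 s).antisymm (not_lt.mp fun hls => (hlow s hls).not_gt hs)).symm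

theorem sum_mul_eq_of_threshold {l u x h : S → ℝ} {t : ℝ} (hsum : ∑ s, h s = 1)
    (ht : ∀ s, (x s < t → h s = u s) ∧ (t < x s → h s = l s)) :
    ∑ s, h s * x s = t + ∑ s, l s * (x s - t)⁺ - ∑ s, u s * (x s - t)⁻ := by
  have hpoint : ∀ s, h s * x s = t * h s + (l s * (x s - t)⁺ - u s * (x s - t)⁻) := by
    intro s
    rcases lt_trichotomy (x s) t with hs | hs | hs
    · rw [posPart_eq_zero.mpr (by linarith), negPart_eq_neg.mpr (by linarith), (ht s).1 hs]
      ring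
    · rw [hs, sub_self, posPart_zero, negPart_zero]
      ring
    · rw [posPart_eq_self.mpr (by linarith), negPart_eq_zero.mpr (by linarith), (ht s).2 hs]
      ring
  rw [sum_congr rfl fun s _ => hpoint s, sum_add_distrib, ← mul_sum, hsum, sum_sub_distrib,
    mul_one, add_sub_assoc]

theorem dual_value_le {l u x h : S → ℝ} (hH : h ∈ intervalSimplex l u) {γ₁ : ℝ} {γ₂ γ₃ : S → ℝ}
    (hγ₂ : ∀ s, 0 ≤ γ₂ s) (hγ₃ : ∀ s, 0 ≤ γ₃ s) (hγ : ∀ s, x s - γ₂ s + γ₃ s - γ₁ = 0) :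
    γ₁ + ∑ s, l s * γ₂ s - ∑ s, u s * γ₃ s ≤ ∑ s, h s * x s := by
  obtain ⟨hl, hu, hsum⟩ := hH
  have hpoint : ∀ s, h s * x s = γ₁ * h s + (h s * γ₂ s - h s * γ₃ s) := fun s => by
    rw [show x s = γ₁ + γ₂ s - γ₃ s by linarith [hγ s]]
    ring
  have hl' : ∑ s, l s * γ₂ s ≤ ∑ s, h s * γ₂ s :=
    sum_le_sum fun s _ => mul_le_mul_of_nonneg_right (hl s) (hγ₂ s)
  have hu' : ∑ s, h s * γ₃ s ≤ ∑ s, u s * γ₃ s :=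
    sum_le_sum fun s _ => mul_le_mul_of_nonneg_right (hu s) (hγ₃ s)
  rw [sum_congr rfl fun s _ => hpoint s, sum_add_distrib, sum_sub_distrib, ← mul_sum, hsum]
  linarith

end

/-- Strong LP duality for the inner nature-minimization problem over the
interval-distribution polytope. -/
theorem inner_minimization_strong_duality (S : Type*) [Fintype S]
    (l u x : S → ℝ)
    (hne : ({h : S → ℝ | (∀ s, l s ≤ h s) ∧ (∀ s, h s ≤ u s) ∧ ∑ s, h s = 1}).Nonempty) :
    sInf {v : ℝ | ∃ h : S → ℝ, (∀ s, l s ≤ h s) ∧ (∀ s, h s ≤ u s) ∧ (∑ s, h s = 1) ∧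
        v = ∑ s, h s * x s} =
    sSup {v : ℝ | ∃ (γ₁ : ℝ) (γ₂ γ₃ : S → ℝ), (∀ s, 0 ≤ γ₂ s) ∧ (∀ s, 0 ≤ γ₃ s) ∧
        (∀ s, x s - γ₂ s + γ₃ s - γ₁ = 0) ∧
        v = γ₁ + ∑ s, l s * γ₂ s - ∑ s, u s * γ₃ s} := by
  obtain ⟨h, hH, hmin⟩ := (isCompact_intervalSimplex l u).exists_isMinOn hne
    (by fun_prop : Continuous fun g : S → ℝ => ∑ s, g s * x s).continuousOn
  obtain ⟨t, ht⟩ := exists_threshold_of_isMinOn hH hmin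
  refine ((?_ : IsLeast _ (∑ s, h s * x s)).csInf_eq).trans
    ((?_ : IsGreatest _ (∑ s, h s * x s)).csSup_eq).symm
  · refine ⟨⟨h, hH.1, hH.2.1, hH.2.2, rfl⟩, ?_⟩
    rintro _ ⟨g, hgl, hgu, hgs, rfl⟩
    exact hmin ⟨hgl, hgu, hgs⟩
  · refine ⟨⟨t, fun s => (x s - t)⁺, fun s => (x s - t)⁻, fun s => posPart_nonneg _,
      fun s => negPart_nonneg _, fun s => ?_, sum_mul_eq_of_threshold hH.2.2 ht⟩, ?_⟩
    · linarith [posPart_sub_negPart (x s - t)]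
    · rintro _ ⟨γ₁, γ₂, γ₃, hγ₂, hγ₃, hγ, rfl⟩
      exact dual_value_le hH hγ₂ hγ₃ hγ
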